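/- arXiv:0901.2196 — 4 statements merged into one kernel-verified Lean document; each statement's English description precedes it below -/
import Mathlib

section
/- In the braid group B_3, for every integer n ≥ 2, (σ1σ2)^{3n} = σ1^3σ2 · (σ1^4σ2)^{n-2} · σ1^3σ2 · σ1^{n+1}σ2. -/
section BraidAux

variable {G : Type*} [Group G]

private lemma braid_bw (a b : G) (hrel : a * b * a = b * a * b) :
    a * (b * a^2 * b) = (b * a^2 * b) * a := by
  have h1 : a * (b * a^2 * b) = a*b*a*(a*b) := by
    simp only [pow_succ', pow_zero, mul_one, one_mul, mul_assoc]
  have h2 : (b * a^2 * b) * a = b*a*(a*b*a) := by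
    simp only [pow_succ', pow_zero, mul_one, one_mul, mul_assoc]
  rw [h1, h2, hrel]
  simp only [mul_assoc]

private lemma braid_bz (a b : G) (hrel : a * b * a = b * a * b) :
    (a*b)^3 = a^2 * (b * a^2 * b) := by
  have h1 : (a*b)^3 = a*(b*a*b)*(a*b) := by
    simp only [pow_succ', pow_zero, mul_one, one_mul, mul_assoc]
  rw [h1, ← hrel]
  simp only [pow_succ', pow_zero, mul_one, one_mul, mul_assoc]

private lemma braid_h4 (a b : G) (hrel : a * b * a = b * a * b) :
    a*(b*(a*b)) = a^2*(b*a) := by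
  calc a*(b*(a*b)) = a*(b*a*b) := by simp only [mul_assoc]
    _ = a*(a*b*a) := by rw [hrel]
    _ = a^2*(b*a) := by simp only [pow_succ', pow_zero, mul_one, one_mul, mul_assoc]

private lemma braid_Ca (a b : G) (hrel : a * b * a = b * a * b) :
    Commute ((a*b)^3) a := by
  show (a*b)^3 * a = a * (a*b)^3
  rw [braid_bz a b hrel]
  calc a^2*(b*a^2*b)*a = a^2*((b*a^2*b)*a) := by simp only [mul_assoc]
    _ = a^2*(a*(b*a^2*b)) := by rw [← braid_bw a b hrel]
    _ = a*(a^2*(b*a^2*b)) := by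
        simp only [pow_succ', pow_zero, mul_one, one_mul, mul_assoc]

private lemma braid_Cb (a b : G) (hrel : a * b * a = b * a * b) :
    Commute ((a*b)^3) b := by
  show (a*b)^3 * b = b * (a*b)^3
  rw [braid_bz a b hrel]
  have Cw : Commute a (b*a^2*b) := braid_bw a b hrel
  have hc2 : a^2*(b*a^2*b) = (b*a^2*b)*a^2 := (Cw.pow_left 2).eq
  calc a^2*(b*a^2*b)*b = ((b*a^2*b)*a^2)*b := by rw [hc2]
    _ = b*(a^2*(b*a^2*b)) := by
        simp only [pow_succ', pow_zero, mul_one, one_mul, mul_assoc]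

end BraidAux

theorem braid_pow_three_mul {G : Type*} [Group G] (a b : G)
    (hrel : a * b * a = b * a * b) :
    ∀ n : ℕ, 2 ≤ n →
      (a * b) ^ (3 * n) =
        a ^ 3 * b * (a ^ 4 * b) ^ (n - 2) * (a ^ 3 * b) * a ^ (n + 1) * b := by
  have bw := braid_bw a b hrel
  have bz := braid_bz a b hrel
  have h4 := braid_h4 a b hrel
  have Cw : Commute a (b*a^2*b) := bw
  have Ca := braid_Ca a b hrel
  have Cb := braid_Cb a b hrel
  intro n hn
  induction n, hn using Nat.le_induction with
  | base =>
    rw [pow_mul, bz]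
    simp only [show (2:ℕ)-2 = 0 from rfl, pow_zero, mul_one]
    have hc2 : a^2*(b*a^2*b) = (b*a^2*b)*a^2 := (Cw.pow_left 2).eq
    calc (a^2*(b*a^2*b))^2
        = a^2*((b*a^2*b)*a^2)*(b*a^2*b) := by
          simp only [pow_succ', pow_zero, mul_one, one_mul, mul_assoc]
      _ = a^2*(a^2*(b*a^2*b))*(b*a^2*b) := by rw [hc2]
      _ = a^3*(a*(b*a^2*b))*(b*a^2*b) := by
          simp only [pow_succ', pow_zero, mul_one, one_mul, mul_assoc]
      _ = a^3*((b*a^2*b)*a)*(b*a^2*b) := by rw [bw]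
      _ = a^3*b*a*(a*(b*(a*b)))*(a^2*b) := by
          simp only [pow_succ', pow_zero, mul_one, one_mul, mul_assoc]
      _ = a^3*b*a*(a^2*(b*a))*(a^2*b) := by rw [h4]
      _ = a ^ 3 * b * (a ^ 3 * b) * a ^ (2 + 1) * b := by
          simp only [pow_succ', pow_zero, mul_one, one_mul, mul_assoc]
  | succ n hn ih =>
    have e1 : 3*(n+1) = 3*n+3 := by ring
    rw [e1, pow_add, ih]
    have e2 : n+1-2 = (n-2)+1 := by omega
    rw [e2, pow_succ (a^4*b) (n-2)]
    have K : (a^3*b)*a^(n+1)*b*(a*b)^3 = (a^4*b)*((a^3*b)*a^(n+1+1)*b) := by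
      calc (a^3*b)*a^(n+1)*b*(a*b)^3
          = a^3*b*(a^(n+1)*(b*(a*b)^3)) := by simp only [mul_assoc]
        _ = a^3*b*(a^(n+1)*((a*b)^3*b)) := by rw [← Cb.eq]
        _ = a^3*b*(a^(n+1)*(a*b)^3)*b := by simp only [mul_assoc]
        _ = a^3*b*((a*b)^3*a^(n+1))*b := by rw [← (Ca.pow_right (n+1)).eq]
        _ = a^3*(b*(a*b)^3)*(a^(n+1)*b) := by simp only [mul_assoc]
        _ = a^3*((a*b)^3*b)*(a^(n+1)*b) := by rw [← Cb.eq]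
        _ = a^3*(a^2*(b*a^2*b))*(b*(a^(n+1)*b)) := by
            rw [bz]; simp only [mul_assoc]
        _ = a^4*(a*(b*a^2*b))*(b*(a^(n+1)*b)) := by
            simp only [pow_succ', pow_zero, mul_one, one_mul, mul_assoc]
        _ = a^4*((b*a^2*b)*a)*(b*(a^(n+1)*b)) := by rw [bw]
        _ = a^4*b*a*(a*(b*(a*b)))*(a^(n+1)*b) := by
            simp only [pow_succ', pow_zero, mul_one, one_mul, mul_assoc]
        _ = a^4*b*a*(a^2*(b*a))*(a^(n+1)*b) := by rw [h4]
        _ = (a^4*b)*((a^3*b)*a^(n+1+1)*b) := by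
            simp only [pow_succ', pow_zero, mul_one, one_mul, mul_assoc]
    calc a^3*b*(a^4*b)^(n-2)*(a^3*b)*a^(n+1)*b*(a*b)^3
        = a^3*b*(a^4*b)^(n-2)*((a^3*b)*a^(n+1)*b*(a*b)^3) := by
          simp only [mul_assoc]
      _ = a^3*b*(a^4*b)^(n-2)*((a^4*b)*((a^3*b)*a^(n+1+1)*b)) := by rw [K]
      _ = a^3*b*((a^4*b)^(n-2)*(a^4*b))*(a^3*b)*a^(n+1+1)*b := by
          simp only [mul_assoc]
end

section
/- In the braid group B_3, for every integer n ≥ 2, (σ1σ2)^{3n+1} = σ1^3σ2 · (σ1^4σ2)^{n-2} · σ1^3σ2 · σ1^{n+2}σ2σ1. -/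
private lemma braidL1 {G : Type*} [Group G] (a b : G)
    (hrel : a * b * a = b * a * b) :
    (a * b) ^ 7 = a ^ 3 * b * (a ^ 3 * b) * a ^ 4 * b * a := by
  calc (a * b) ^ 7
      _ = (a) * (b * a * b) * (a * b * a * b * a * b * a * b * a * b) := by simp [pow_succ, mul_assoc]
      _ = (a) * (a * b * a) * (a * b * a * b * a * b * a * b * a * b) := congrArg (· * (a * b * a * b * a * b * a * b * a * b)) (congrArg ((a) * ·) hrel.symm)
      _ = (a * a * b * a) * (a * b * a) * (b * a * b * a * b * a * b) := by simp [pow_succ, mul_assoc]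
      _ = (a * a * b * a) * (b * a * b) * (b * a * b * a * b * a * b) := congrArg (· * (b * a * b * a * b * a * b)) (congrArg ((a * a * b * a) * ·) hrel)
      _ = (a * a) * (b * a * b) * (a * b * b * a * b * a * b * a * b) := by simp [pow_succ, mul_assoc]
      _ = (a * a) * (a * b * a) * (a * b * b * a * b * a * b * a * b) := congrArg (· * (a * b * b * a * b * a * b * a * b)) (congrArg ((a * a) * ·) hrel.symm)
      _ = (a * a * a * b * a * a * b) * (b * a * b) * (a * b * a * b) := by simp [pow_succ, mul_assoc]
      _ = (a * a * a * b * a * a * b) * (a * b * a) * (a * b * a * b) := congrArg (· * (a * b * a * b)) (congrArg ((a * a * a * b * a * a * b) * ·) hrel.symm)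
      _ = (a * a * a * b * a * a) * (b * a * b) * (a * a * b * a * b) := by simp [pow_succ, mul_assoc]
      _ = (a * a * a * b * a * a) * (a * b * a) * (a * a * b * a * b) := congrArg (· * (a * a * b * a * b)) (congrArg ((a * a * a * b * a * a) * ·) hrel.symm)
      _ = (a * a * a * b * a * a * a * b * a * a * a) * (b * a * b) := by simp [pow_succ, mul_assoc]
      _ = (a * a * a * b * a * a * a * b * a * a * a) * (a * b * a) := congrArg ((a * a * a * b * a * a * a * b * a * a * a) * ·) hrel.symm
      _ = a ^ 3 * b * (a ^ 3 * b) * a ^ 4 * b * a := by simp [pow_succ, mul_assoc]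

private lemma braidL2core {G : Type*} [Group G] (a b : G)
    (hrel : a * b * a = b * a * b) :
    (a * b) ^ 3 * (a ^ 3 * b) = a ^ 4 * b * (a ^ 3 * b) * a := by
  calc (a * b) ^ 3 * (a ^ 3 * b)
      _ = (a) * (b * a * b) * (a * b * a * a * a * b) := by simp [pow_succ, mul_assoc]
      _ = (a) * (a * b * a) * (a * b * a * a * a * b) := congrArg (· * (a * b * a * a * a * b)) (congrArg ((a) * ·) hrel.symm)
      _ = (a * a * b * a) * (a * b * a) * (a * a * b) := by simp [pow_succ, mul_assoc]
      _ = (a * a * b * a) * (b * a * b) * (a * a * b) := congrArg (· * (a * a * b)) (congrArg ((a * a * b * a) * ·) hrel)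
      _ = (a * a) * (b * a * b) * (a * b * a * a * b) := by simp [pow_succ, mul_assoc]
      _ = (a * a) * (a * b * a) * (a * b * a * a * b) := congrArg (· * (a * b * a * a * b)) (congrArg ((a * a) * ·) hrel.symm)
      _ = (a * a * a * b * a) * (a * b * a) * (a * b) := by simp [pow_succ, mul_assoc]
      _ = (a * a * a * b * a) * (b * a * b) * (a * b) := congrArg (· * (a * b)) (congrArg ((a * a * a * b * a) * ·) hrel)
      _ = (a * a * a) * (b * a * b) * (a * b * a * b) := by simp [pow_succ, mul_assoc]
      _ = (a * a * a) * (a * b * a) * (a * b * a * b) := congrArg (· * (a * b * a * b)) (congrArg ((a * a * a) * ·) hrel.symm)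
      _ = (a * a * a * a * b * a * a) * (b * a * b) := by simp [pow_succ, mul_assoc]
      _ = (a * a * a * a * b * a * a) * (a * b * a) := congrArg ((a * a * a * a * b * a * a) * ·) hrel.symm
      _ = a ^ 4 * b * (a ^ 3 * b) * a := by simp [pow_succ, mul_assoc]

private lemma braidC1 {G : Type*} [Group G] (a b : G)
    (hrel : a * b * a = b * a * b) :
    a * (a * b) ^ 3 = (a * b) ^ 3 * a := by
  calc a * (a * b) ^ 3
      _ = (a) * (a * b * a) * (b * a * b) := by simp [pow_succ, mul_assoc]
      _ = (a) * (b * a * b) * (b * a * b) := congrArg (· * (b * a * b)) (congrArg ((a) * ·) hrel)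
      _ = (a * b * a * b) * (b * a * b) := by simp [pow_succ, mul_assoc]
      _ = (a * b * a * b) * (a * b * a) := congrArg ((a * b * a * b) * ·) hrel.symm
      _ = (a * b) ^ 3 * a := by simp [pow_succ, mul_assoc]

private lemma braidC2 {G : Type*} [Group G] (a b : G)
    (hrel : a * b * a = b * a * b) :
    b * (a * b) ^ 3 = (a * b) ^ 3 * b := by
  calc b * (a * b) ^ 3
      _ = (b * a * b) * (a * b * a * b) := by simp [pow_succ, mul_assoc]
      _ = (a * b * a) * (a * b * a * b) := congrArg (· * (a * b * a * b)) hrel.symm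
      _ = (a * b * a) * (a * b * a) * (b) := by simp [pow_succ, mul_assoc]
      _ = (a * b * a) * (b * a * b) * (b) := congrArg (· * (b)) (congrArg ((a * b * a) * ·) hrel)
      _ = (a * b) ^ 3 * b := by simp [pow_succ, mul_assoc]


theorem braid_pow_three_mul_add_one {G : Type*} [Group G] (a b : G)
    (hrel : a * b * a = b * a * b) :
    ∀ n : ℕ, 2 ≤ n →
      (a * b) ^ (3 * n + 1) =
        a ^ 3 * b * (a ^ 4 * b) ^ (n - 2) * (a ^ 3 * b) * a ^ (n + 2) * b * a := by
  have comm_a : Commute ((a * b) ^ 3) a := (braidC1 a b hrel).symm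
  have comm_b : Commute ((a * b) ^ 3) b := (braidC2 a b hrel).symm
  have hc_pow : ∀ (k : ℕ) (w : G),
      (a * b) ^ 3 * (a ^ k * w) = a ^ k * ((a * b) ^ 3 * w) := by
    intro k w
    rw [← mul_assoc, (comm_a.pow_right k).eq, mul_assoc]
  have hc_b : ∀ w : G, (a * b) ^ 3 * (b * w) = b * ((a * b) ^ 3 * w) := by
    intro w
    rw [← mul_assoc, comm_b.eq, mul_assoc]
  have hL2 : ∀ w : G, (a * b) ^ 3 * (a ^ 3 * (b * w)) =
      a ^ 4 * (b * (a ^ 3 * (b * (a * w)))) := by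
    intro w
    calc (a * b) ^ 3 * (a ^ 3 * (b * w))
        = ((a * b) ^ 3 * (a ^ 3 * b)) * w := by simp [pow_succ, mul_assoc]
      _ = (a ^ 4 * b * (a ^ 3 * b) * a) * w := by rw [braidL2core a b hrel]
      _ = a ^ 4 * (b * (a ^ 3 * (b * (a * w)))) := by simp [pow_succ, mul_assoc]
  intro n hn
  induction n, hn using Nat.le_induction with
  | base =>
    norm_num
    rw [braidL1 a b hrel]
  | succ n hn ih =>
    have hc_P : Commute ((a * b) ^ 3) ((a ^ 4 * b) ^ (n - 2)) :=
      ((comm_a.pow_right 4).mul_right comm_b).pow_right _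
    have hc_P' : ∀ w : G, (a * b) ^ 3 * ((a ^ 4 * b) ^ (n - 2) * w) =
        (a ^ 4 * b) ^ (n - 2) * ((a * b) ^ 3 * w) := by
      intro w
      rw [← mul_assoc, hc_P.eq, mul_assoc]
    have e1 : 3 * (n + 1) + 1 = 3 + (3 * n + 1) := by ring
    have e2 : n + 1 - 2 = (n - 2) + 1 := by omega
    have e3 : n + 1 + 2 = (n + 2) + 1 := by omega
    rw [e1, pow_add, ih, e2, e3, pow_succ (a ^ 4 * b) (n - 2), pow_succ' a (n + 2)]
    simp only [mul_assoc]
    rw [hc_pow, hc_b, hc_P', hL2]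
end

section
/- In the braid group B_3, for every integer n ≥ 2, (σ1σ2)^{3n+2} = σ1^3σ2 · (σ1^4σ2)^{n-1} · σ1^3σ2 · σ1^{n+1}. -/
theorem braid_pow_three_mul_add_two {G : Type*} [Group G] (a b : G)
    (hrel : a * b * a = b * a * b) :
    ∀ n : ℕ, 2 ≤ n →
      (a * b) ^ (3 * n + 2) =
        a ^ 3 * b * (a ^ 4 * b) ^ (n - 1) * (a ^ 3 * b) * a ^ (n + 1) := by
  have hq' : b*(a*(a*(b*a))) = a*(b*(a*(a*b))) := by
    calc b*(a*(a*(b*a))) = b*a*(a*b*a) := by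
          simp only [pow_succ, pow_zero, one_mul, mul_assoc]
      _ = b*a*(b*a*b) := by rw [hrel]
      _ = (b*a*b)*(a*b) := by simp only [pow_succ, pow_zero, one_mul, mul_assoc]
      _ = (a*b*a)*(a*b) := by rw [hrel]
      _ = a*(b*(a*(a*b))) := by simp only [pow_succ, pow_zero, one_mul, mul_assoc]
  have hDa : a*b*a*a = b*(a*b*a) := by
    calc a*b*a*a = b*a*b*a := by rw [hrel]
      _ = b*(a*b*a) := by simp only [pow_succ, pow_zero, one_mul, mul_assoc]
  have hDb : a*b*a*b = a*(a*b*a) := by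
    calc a*b*a*b = a*(b*a*b) := by simp only [pow_succ, pow_zero, one_mul, mul_assoc]
      _ = a*(a*b*a) := by rw [hrel]
  have hDD : (a*b)^3 = (a*b*a)*(a*b*a) := by
    calc (a*b)^3 = (a*b*a)*(b*a*b) := by
          simp only [pow_succ, pow_zero, one_mul, mul_assoc]
      _ = (a*b*a)*(a*b*a) := by rw [hrel]
  have h3a : Commute ((a*b)^3) a := by
    have h : (a*b)^3 * a = a * (a*b)^3 := by
      rw [hDD]
      calc (a*b*a)*(a*b*a)*a = (a*b*a)*(a*b*a*a) := by
            simp only [pow_succ, pow_zero, one_mul, mul_assoc]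
        _ = (a*b*a)*(b*(a*b*a)) := by rw [hDa]
        _ = (a*b*a*b)*(a*b*a) := by simp only [pow_succ, pow_zero, one_mul, mul_assoc]
        _ = (a*(a*b*a))*(a*b*a) := by rw [hDb]
        _ = a*((a*b*a)*(a*b*a)) := by simp only [pow_succ, pow_zero, one_mul, mul_assoc]
    exact h
  have h3b : Commute ((a*b)^3) b := by
    have h : (a*b)^3 * b = b * (a*b)^3 := by
      rw [hDD]
      calc (a*b*a)*(a*b*a)*b = (a*b*a)*(a*b*a*b) := by
            simp only [pow_succ, pow_zero, one_mul, mul_assoc]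
        _ = (a*b*a)*(a*(a*b*a)) := by rw [hDb]
        _ = (a*b*a*a)*(a*b*a) := by simp only [pow_succ, pow_zero, one_mul, mul_assoc]
        _ = (b*(a*b*a))*(a*b*a) := by rw [hDa]
        _ = b*((a*b*a)*(a*b*a)) := by simp only [pow_succ, pow_zero, one_mul, mul_assoc]
    exact h
  have hkey' : a^4*b*(a^3*b)*a = a^3*b*(a*b)^3 := by
    calc a^4*b*(a^3*b)*a = a^3*((b*a*b)*(a*(a*(b*a)))) := by
          rw [← hrel]; simp only [pow_succ, pow_zero, one_mul, mul_assoc]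
      _ = a^3*(b*(a*(b*(a*(a*(b*a)))))) := by
          simp only [pow_succ, pow_zero, one_mul, mul_assoc]
      _ = a^3*(b*(a*(a*(b*(a*(a*b)))))) := by rw [hq']
      _ = a^3*(b*(a*((a*b*a)*(a*b)))) := by
          simp only [pow_succ, pow_zero, one_mul, mul_assoc]
      _ = a^3*(b*(a*((b*a*b)*(a*b)))) := by rw [hrel]
      _ = a^3*b*(a*b)^3 := by simp only [pow_succ, pow_zero, one_mul, mul_assoc]
  have hc3 : a^2*b*(a^2*b) = (a*b)^3 := by
    calc a^2*b*(a^2*b) = a*((a*b*a)*(a*b)) := by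
          simp only [pow_succ, pow_zero, one_mul, mul_assoc]
      _ = a*((b*a*b)*(a*b)) := by rw [hrel]
      _ = (a*b)^3 := by simp only [pow_succ, pow_zero, one_mul, mul_assoc]
  have h5 : a^3*b*a^3*b*a^2 = (a*b)^5 := by
    calc a^3*b*a^3*b*a^2 = a^2*((a*b*a)*(a*(a*(b*(a*a))))) := by
          simp only [pow_succ, pow_zero, one_mul, mul_assoc]
      _ = a^2*((b*a*b)*(a*(a*(b*(a*a))))) := by rw [hrel]
      _ = a^2*(b*a*(b*(a*(a*(b*a))))*a) := by
          simp only [pow_succ, pow_zero, one_mul, mul_assoc]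
      _ = a^2*(b*a*(a*(b*(a*(a*b))))*a) := by rw [hq']
      _ = a^2*((b*(a*(a*(b*a))))*(a*b*a)) := by
          simp only [pow_succ, pow_zero, one_mul, mul_assoc]
      _ = a^2*((b*(a*(a*(b*a))))*(b*a*b)) := by rw [hrel]
      _ = a^2*b*(a^2*b)*((a*b)^2) := by
          simp only [pow_succ, pow_zero, one_mul, mul_assoc]
      _ = (a*b)^3*(a*b)^2 := by rw [hc3]
      _ = (a*b)^5 := by simp only [pow_succ, pow_zero, one_mul, mul_assoc]
  intro n hn
  induction n, hn using Nat.le_induction with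
  | base =>
    have base2 : a^3*b*(a^4*b)*(a^3*b)*a^3 = (a*b)^8 := by
      calc a^3*b*(a^4*b)*(a^3*b)*a^3 = a^3*b*(a^4*b*(a^3*b)*a)*a^2 := by
            simp only [pow_succ, pow_zero, one_mul, mul_assoc]
        _ = a^3*b*(a^3*b*(a*b)^3)*a^2 := by rw [hkey']
        _ = a^3*b*(a^3*b)*((a*b)^3*a^2) := by
            simp only [pow_succ, pow_zero, one_mul, mul_assoc]
        _ = a^3*b*(a^3*b)*(a^2*(a*b)^3) := by rw [(h3a.pow_right 2).eq]
        _ = a^3*b*a^3*b*a^2*(a*b)^3 := by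
            simp only [pow_succ, pow_zero, one_mul, mul_assoc]
        _ = (a*b)^5*(a*b)^3 := by rw [h5]
        _ = (a*b)^8 := by simp only [pow_succ, pow_zero, one_mul, mul_assoc]
    show (a*b)^(3*2+2) = a^3*b*(a^4*b)^(2-1)*(a^3*b)*a^(2+1)
    norm_num
    exact base2.symm
  | succ n hn ih =>
    obtain ⟨k, rfl⟩ : ∃ k, n = k + 2 := ⟨n - 2, by omega⟩
    simp only [show k+2-1 = k+1 from rfl, show k+2+1-1 = k+2 from rfl] at ih ⊢
    have step : a^3*b*(a^4*b)^(k+2)*(a^3*b)*a^(k+2+1+1)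
        = (a*b)^(3*(k+2+1)+2) := by
      calc a^3*b*(a^4*b)^(k+2)*(a^3*b)*a^(k+2+1+1)
          = a^3*b*(a^4*b)^(k+1)*(a^4*b*(a^3*b)*a)*a^(k+2+1) := by
            rw [pow_succ (a^4*b) (k+1), pow_succ' a (k+2+1)]
            simp only [pow_succ, pow_zero, one_mul, mul_assoc]
        _ = a^3*b*(a^4*b)^(k+1)*(a^3*b*(a*b)^3)*a^(k+2+1) := by rw [hkey']
        _ = a^3*b*(a^4*b)^(k+1)*(a^3*b)*((a*b)^3*a^(k+2+1)) := by
            simp only [pow_succ, pow_zero, one_mul, mul_assoc]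
        _ = a^3*b*(a^4*b)^(k+1)*(a^3*b)*(a^(k+2+1)*(a*b)^3) := by
            rw [(h3a.pow_right (k+2+1)).eq]
        _ = a^3*b*(a^4*b)^(k+1)*(a^3*b)*a^(k+2+1)*(a*b)^3 := by
            simp only [pow_succ, pow_zero, one_mul, mul_assoc]
        _ = (a*b)^(3*(k+2)+2)*(a*b)^3 := by rw [← ih]
        _ = (a*b)^(3*(k+2+1)+2) := by
            rw [← pow_add, show 3*(k+2)+2+3 = 3*(k+2+1)+2 by ring]
    exact step.symm
end

section
/- In the braid group B_3, the element (σ1σ2)^{3n}σ1^{-3}σ2^{-1} is conjugate to (σ1σ2)^{3n-2} for every integer n. -/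
theorem braid_conj_neg_three {G : Type*} [Group G] (a b : G)
    (hrel : a * b * a = b * a * b)
    (hcentral : ∀ g : G, (a * b) ^ 3 * g = g * (a * b) ^ 3) :
    ∀ n : ℤ, IsConj ((a * b) ^ (3 * n) * a ^ (-3 : ℤ) * b⁻¹)
      ((a * b) ^ (3 * n - 2)) := by
  intro n
  have hcomm : ∀ g : G, (a * b) ^ (3 * n) * g = g * (a * b) ^ (3 * n) := by
    intro g
    have h : Commute ((a * b) ^ 3) g := hcentral g
    have h2 := h.zpow_left n
    rwa [← zpow_natCast, ← zpow_mul] at h2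
  have key : (a * b) ^ (2 : ℤ) = a ^ 2 * (b * a) := by
    rw [zpow_two, mul_assoc a b (a * b), ← mul_assoc b a b, ← hrel, pow_two]
    simp [mul_assoc]
  rw [isConj_iff]
  refine ⟨a ^ 2, ?_⟩
  rw [show a ^ 2 * ((a * b) ^ (3 * n) * a ^ (-3 : ℤ) * b⁻¹) * (a ^ 2)⁻¹
      = (a ^ 2 * (a * b) ^ (3 * n)) * (a ^ (-3 : ℤ) * b⁻¹ * (a ^ 2)⁻¹) from by group,
    ← hcomm (a ^ 2), mul_assoc ((a * b) ^ (3 * n))]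
  have fin : a ^ 2 * (a ^ (-3 : ℤ) * b⁻¹ * (a ^ 2)⁻¹) = ((a * b) ^ (2 : ℤ))⁻¹ := by
    rw [key, pow_two]
    group
  rw [fin, sub_eq_add_neg, zpow_add, zpow_neg]
end
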